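/- For any configuration of particles in a polyomino with diameter D and k convex corners, applying the command sequence (left, up) repeated D times moves every particle into a northwest convex corner; consequently, if NW corners are the least frequent type, the resulting configuration has at most k/4 occupied cells. -/
import Mathlib


/-- A cell of the integer grid. -/
abbrev Cell := ℤ × ℤ

/-- The four tilt commands. -/
inductive Cmd | up | down | left | right

/-- The unit displacement of a command. -/
def Cmd.dir : Cmd → Cell
  | .up => (0, 1)
  | .down => (0, -1)
  | .left => (-1, 0)
  | .right => (1, 0)

/-- A particle in cell `c` moves one unit in direction `d` unless blocked. -/
def step (P : Finset Cell) (d : Cmd) (c : Cell) : Cell :=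
  if c + d.dir ∈ P then c + d.dir else c

/-- Apply a command sequence to a single particle. -/
def applySeq (P : Finset Cell) (C : List Cmd) (c : Cell) : Cell :=
  C.foldl (fun x d => step P d x) c

/-- `f` is a grid path of length `ℓ` from `p` to `q` staying inside `P`. -/
def IsPath (P : Finset Cell) (p q : Cell) (ℓ : ℕ) : Prop :=
  ∃ f : ℕ → Cell, f 0 = p ∧ f ℓ = q ∧ (∀ i ≤ ℓ, f i ∈ P) ∧
    ∀ i < ℓ, |(f (i + 1)).1 - (f i).1| + |(f (i + 1)).2 - (f i).2| = 1

/-- The length of a shortest grid path between `p` and `q` inside `P`. -/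
noncomputable def pdist (P : Finset Cell) (p q : Cell) : ℕ :=
  sInf {ℓ | IsPath P p q ℓ}

/-- `c` is a northwest convex corner of `P`: its left and top neighbors are blocked. -/
def NWCorner (P : Finset Cell) (c : Cell) : Prop :=
  c ∈ P ∧ c + (-1, 0) ∉ P ∧ c + (0, 1) ∉ P

/-- The command sequence `(left, up)` repeated `ℓ` times. -/
def luSeq (ℓ : ℕ) : List Cmd := (List.replicate ℓ [Cmd.left, Cmd.up]).flatten
section Aux

variable {P : Finset Cell}

lemma step_mem {c : Cell} (h : c ∈ P) (d : Cmd) : step P d c ∈ P := by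
  unfold step; split
  · assumption
  · exact h

/-- One `(left, up)` round. -/
def roundLU (P : Finset Cell) (c : Cell) : Cell := step P Cmd.up (step P Cmd.left c)

lemma applySeq_luSeq (n : ℕ) (c : Cell) :
    applySeq P (luSeq n) c = (roundLU P)^[n] c := by
  induction n generalizing c with
  | zero => rfl
  | succ n ih =>
    have h : luSeq (n + 1) = Cmd.left :: Cmd.up :: luSeq n := by
      simp [luSeq, List.replicate_succ]
    rw [h]
    show applySeq P (luSeq n) (roundLU P c) = _
    rw [ih, Function.iterate_succ_apply]

/-- Progress potential relative to start `p`. -/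
def phiLU (p q : Cell) : ℤ := (p.1 - q.1) + (q.2 - p.2)

lemma phi_step_left (p c : Cell) : phiLU p c ≤ phiLU p (step P Cmd.left c) := by
  obtain ⟨x, y⟩ := c
  unfold step
  split
  · simp only [phiLU, Cmd.dir, Prod.mk_add_mk]
    linarith
  · exact le_rfl

lemma phi_step_up (p c : Cell) : phiLU p c ≤ phiLU p (step P Cmd.up c) := by
  obtain ⟨x, y⟩ := c
  unfold step
  split
  · simp only [phiLU, Cmd.dir, Prod.mk_add_mk]
    linarith
  · exact le_rfl

lemma phi_round_lt (p : Cell) {c : Cell} (hc : c ∈ P) (hnw : ¬ NWCorner P c) :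
    phiLU p c + 1 ≤ phiLU p (roundLU P c) := by
  unfold NWCorner at hnw
  push_neg at hnw
  rcases Classical.em (c + (-1, 0) ∈ P) with hl | hl
  · have h1 : step P Cmd.left c = c + (-1, 0) := by simp [step, Cmd.dir, hl]
    have h2 : phiLU p (c + (-1, 0)) = phiLU p c + 1 := by
      obtain ⟨x, y⟩ := c
      simp only [phiLU, Prod.mk_add_mk]
      ring
    have := phi_step_up (P := P) p (c + (-1, 0))
    rw [roundLU, h1]
    omega
  · have hu : c + (0, 1) ∈ P := hnw hc hl
    have h1 : step P Cmd.left c = c := by simp [step, Cmd.dir, hl]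
    have h2 : step P Cmd.up c = c + (0, 1) := by simp [step, Cmd.dir, hu]
    rw [roundLU, h1, h2]
    obtain ⟨x, y⟩ := c
    simp only [phiLU, Prod.mk_add_mk]
    linarith

lemma isPath_refl {p : Cell} (h : p ∈ P) : IsPath P p p 0 :=
  ⟨fun _ => p, rfl, rfl, fun _ _ => h, fun i hi => absurd hi (Nat.not_lt_zero i)⟩

lemma isPath_trans {p q r : Cell} {ℓ₁ ℓ₂ : ℕ}
    (h1 : IsPath P p q ℓ₁) (h2 : IsPath P q r ℓ₂) : IsPath P p r (ℓ₁ + ℓ₂) := by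
  obtain ⟨f, hf0, hfl, hfm, hfs⟩ := h1
  obtain ⟨g, hg0, hgl, hgm, hgs⟩ := h2
  refine ⟨fun i => if i ≤ ℓ₁ then f i else g (i - ℓ₁), by simp [hf0], ?_, ?_, ?_⟩
  · by_cases h : ℓ₂ = 0
    · subst h
      simp [hfl, ← hgl, hg0]
    · have h1 : ¬ (ℓ₁ + ℓ₂ ≤ ℓ₁) := by omega
      simp only [h1, if_false]
      have e : ℓ₁ + ℓ₂ - ℓ₁ = ℓ₂ := by omega
      rw [e, hgl]
  · intro i hi
    by_cases h : i ≤ ℓ₁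
    · simp only [h, if_true]; exact hfm i h
    · simp only [h, if_false]; exact hgm (i - ℓ₁) (by omega)
  · intro i hi
    rcases lt_trichotomy i ℓ₁ with h | h | h
    · have e1 : i + 1 ≤ ℓ₁ := h
      simp only [e1, if_true, le_of_lt h]
      exact hfs i h
    · subst h
      have h2 : ℓ₂ ≠ 0 := by omega
      have e1 : ¬ (i + 1 ≤ i) := by omega
      simp only [e1, if_false, le_refl, if_true]
      have e2 : i + 1 - i = 1 := by omega
      rw [e2, hfl, ← hg0]
      exact hgs 0 (by omega)
    · have e1 : ¬ (i ≤ ℓ₁) := by omega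
      have e2 : ¬ (i + 1 ≤ ℓ₁) := by omega
      simp only [e1, e2, if_false]
      have e3 : i + 1 - ℓ₁ = (i - ℓ₁) + 1 := by omega
      rw [e3]
      exact hgs (i - ℓ₁) (by omega)

lemma exists_isPath_step {c : Cell} (h : c ∈ P) (d : Cmd) :
    ∃ ℓ, IsPath P c (step P d c) ℓ := by
  by_cases hd : c + d.dir ∈ P
  · refine ⟨1, fun i => if i = 0 then c else c + d.dir, by simp, by simp [step, hd], ?_, ?_⟩
    · intro i hi
      interval_cases i <;> simp [h, hd]
    · intro i hi
      have : i = 0 := by omega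
      subst this
      simp only [if_pos rfl, one_ne_zero, if_false]
      cases d <;> simp [Cmd.dir, Prod.fst_add, Prod.snd_add]
  · refine ⟨0, ?_⟩
    have : step P d c = c := by simp [step, hd]
    rw [this]
    exact isPath_refl h

lemma exists_isPath_applySeq (C : List Cmd) :
    ∀ {c : Cell}, c ∈ P → ∃ ℓ, IsPath P c (applySeq P C c) ℓ := by
  induction C with
  | nil => intro c h; exact ⟨0, isPath_refl h⟩
  | cons d C ih =>
    intro c h
    obtain ⟨ℓ₁, h1⟩ := exists_isPath_step h d
    obtain ⟨ℓ₂, h2⟩ := ih (step_mem h d)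
    exact ⟨ℓ₁ + ℓ₂, isPath_trans h1 h2⟩

lemma isPath_dist_le {p q : Cell} {ℓ : ℕ} (h : IsPath P p q ℓ) :
    |p.1 - q.1| + |p.2 - q.2| ≤ (ℓ : ℤ) := by
  obtain ⟨f, hf0, hfl, _, hfs⟩ := h
  have key : ∀ n, n ≤ ℓ → |(f 0).1 - (f n).1| + |(f 0).2 - (f n).2| ≤ (n : ℤ) := by
    intro n
    induction n with
    | zero => simp
    | succ n ih =>
      intro hn
      have h1 := ih (by omega)
      have h2 := hfs n (by omega)
      have ta := abs_sub_le (f 0).1 (f n).1 (f (n + 1)).1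
      have tb := abs_sub_le (f 0).2 (f n).2 (f (n + 1)).2
      have ca := abs_sub_comm ((f (n + 1)).1) ((f n).1)
      have cb := abs_sub_comm ((f (n + 1)).2) ((f n).2)
      push_cast
      linarith
  have := key ℓ le_rfl
  rwa [hf0, hfl] at this

lemma iterate_round_mem {c : Cell} (h : c ∈ P) (n : ℕ) : (roundLU P)^[n] c ∈ P := by
  induction n with
  | zero => exact h
  | succ n ih =>
    rw [Function.iterate_succ_apply']
    exact step_mem (step_mem ih _) _

lemma main_NW (D : ℕ) (hD : ∀ p ∈ P, ∀ q ∈ P, pdist P p q ≤ D)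
    {c : Cell} (hc : c ∈ P) : NWCorner P ((roundLU P)^[D] c) := by
  by_contra hnw
  have habs : ∀ k, k ≤ D → ¬ NWCorner P ((roundLU P)^[k] c) := by
    intro k hk hN
    apply hnw
    have hfix : roundLU P ((roundLU P)^[k] c) = (roundLU P)^[k] c := by
      obtain ⟨_, hl, hu⟩ := hN
      simp [roundLU, step, Cmd.dir, hl, hu]
    have e : (roundLU P)^[D] c = (roundLU P)^[D - k] ((roundLU P)^[k] c) := by
      rw [← Function.iterate_add_apply]
      congr 1
      omega
    rw [e, Function.iterate_fixed hfix]
    exact hN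
  have hphi : ∀ n, n ≤ D + 1 → (n : ℤ) ≤ phiLU c ((roundLU P)^[n] c) := by
    intro n
    induction n with
    | zero => simp [phiLU]
    | succ n ih =>
      intro hn
      have h1 := ih (by omega)
      have h2 := phi_round_lt (P := P) c (iterate_round_mem hc n) (habs n (by omega))
      rw [Function.iterate_succ_apply']
      push_cast
      linarith
  set q := (roundLU P)^[D + 1] c with hq
  have hqP : q ∈ P := iterate_round_mem hc (D + 1)
  obtain ⟨ℓ, hp⟩ := exists_isPath_applySeq (P := P) (luSeq (D + 1)) hc
  rw [applySeq_luSeq] at hp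
  have hne : {m | IsPath P c q m}.Nonempty := ⟨ℓ, hp⟩
  have hmemInf : IsPath P c q (pdist P c q) := Nat.sInf_mem hne
  have hle : |c.1 - q.1| + |c.2 - q.2| ≤ (pdist P c q : ℤ) := isPath_dist_le hmemInf
  have hDq : pdist P c q ≤ D := hD c hc q hqP
  have h1 := hphi (D + 1) le_rfl
  rw [← hq] at h1
  push_cast at h1
  have h2 : phiLU c q ≤ |c.1 - q.1| + |c.2 - q.2| := by
    have a1 := le_abs_self (c.1 - q.1)
    have a2 := le_abs_self (q.2 - c.2)
    have a3 := abs_sub_comm c.2 q.2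
    unfold phiLU
    linarith
  have : (D + 1 : ℤ) ≤ (D : ℤ) := by
    have : (pdist P c q : ℤ) ≤ (D : ℤ) := by exact_mod_cast hDq
    linarith
  linarith

end Aux
/-- Applying `(left, up)^D` (with `D` the diameter) to any configuration `A` inside a
polyomino `P` with `k` convex corners moves every particle into a NW convex corner;
consequently, if NW corners are the least frequent type (there are at most `k / 4` of them),
the resulting configuration occupies at most `k / 4` cells. -/
theorem left_up_reduces_to_NW_corners (P : Finset Cell) (D k : ℕ)
    (hD : ∀ p ∈ P, ∀ q ∈ P, pdist P p q ≤ D)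
    (hk : (P.filter (fun c => c + (-1, 0) ∉ P ∧ c + (0, 1) ∉ P)).card ≤ k / 4)
    (A : Finset Cell) (hA : A ⊆ P) :
    (∀ c ∈ A.image (applySeq P (luSeq D)), NWCorner P c) ∧
    (A.image (applySeq P (luSeq D))).card ≤ k / 4 := by
  have key : ∀ c ∈ A.image (applySeq P (luSeq D)), NWCorner P c := by
    intro c hc
    obtain ⟨a, ha, rfl⟩ := Finset.mem_image.mp hc
    rw [applySeq_luSeq]
    exact main_NW D hD (hA ha)
  refine ⟨key, le_trans (Finset.card_le_card ?_) hk⟩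
  intro c hc
  obtain ⟨hcP, h1, h2⟩ := key c hc
  simp only [Finset.mem_filter]
  exact ⟨hcP, h1, h2⟩
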